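/- arXiv:2110.05253 — 7 statements merged into one kernel-verified Lean document; each statement's English description precedes it below -/
import Mathlib

section
/- Let G be a well-covered finite simple graph with a τ-reduction G₁, …, G_s. Then for every maximal stable set F of G and every i, |F ∩ V(Gᵢ)| = α(Gᵢ). -/
/-- A subset `C` of vertices is a vertex cover of `G` if it meets every edge. -/
def IsVertexCover {V : Type*} (G : SimpleGraph V) (C : Finset V) : Prop :=
  ∀ ⦃a b : V⦄, G.Adj a b → a ∈ C ∨ b ∈ C

/-- A subset `F` of vertices is a stable (independent) set of `G` if it contains no edge. -/
def IsStableSet {V : Type*} (G : SimpleGraph V) (F : Finset V) : Prop :=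
  ∀ ⦃a b : V⦄, a ∈ F → b ∈ F → ¬ G.Adj a b

/-- A maximal stable set. -/
def IsMaximalStableSet {V : Type*} (G : SimpleGraph V) (F : Finset V) : Prop :=
  IsStableSet G F ∧ ∀ F' : Finset V, F ⊂ F' → ¬ IsStableSet G F'

/-- The cover number `τ(G)`: minimum cardinality of a vertex cover. -/
noncomputable def coverNumber {V : Type*} [Fintype V] (G : SimpleGraph V) : ℕ :=
  sInf {k | ∃ C : Finset V, IsVertexCover G C ∧ C.card = k}

/-- The independence number `α(G)`: maximum cardinality of a stable set. -/
noncomputable def indepNumber {V : Type*} [Fintype V] (G : SimpleGraph V) : ℕ :=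
  sSup {k | ∃ F : Finset V, IsStableSet G F ∧ F.card = k}

lemma stableSet_bddAbove {V : Type*} [Fintype V] (G : SimpleGraph V) :
    BddAbove {k | ∃ F : Finset V, IsStableSet G F ∧ F.card = k} := by
  refine ⟨Fintype.card V, fun k hk => ?_⟩
  obtain ⟨F, _, rfl⟩ := hk
  exact Finset.card_le_univ F

lemma stable_card_le_indep {V : Type*} [Fintype V] (G : SimpleGraph V) (F : Finset V)
    (h : IsStableSet G F) : F.card ≤ indepNumber G :=
  le_csSup (stableSet_bddAbove G) ⟨F, h, rfl⟩

lemma gallai {V : Type*} [Fintype V] [DecidableEq V] (G : SimpleGraph V) :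
    indepNumber G + coverNumber G = Fintype.card V := by
  classical
  have hcov_ne : ({k | ∃ C : Finset V, IsVertexCover G C ∧ C.card = k} : Set ℕ).Nonempty :=
    ⟨(Finset.univ : Finset V).card, Finset.univ, fun a b _ => Or.inl (Finset.mem_univ a), rfl⟩
  have hstab_ne : ({k | ∃ F : Finset V, IsStableSet G F ∧ F.card = k} : Set ℕ).Nonempty :=
    ⟨0, ∅, fun a b ha => by simp at ha, Finset.card_empty⟩
  obtain ⟨C, hC, hCcard⟩ := Nat.sInf_mem hcov_ne
  obtain ⟨Fm, hFm, hFmcard⟩ := Nat.sSup_mem hstab_ne (stableSet_bddAbove G)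
  -- complement of min cover is stable
  have h1 : Fintype.card V - coverNumber G ≤ indepNumber G := by
    have hstab : IsStableSet G Cᶜ := by
      intro a b ha hb hadj
      rcases hC hadj with h | h
      · exact (Finset.mem_compl.mp ha) h
      · exact (Finset.mem_compl.mp hb) h
    have := stable_card_le_indep G Cᶜ hstab
    rwa [Finset.card_compl, hCcard] at this
  -- complement of max stable set is a cover
  have h2 : coverNumber G ≤ Fintype.card V - indepNumber G := by
    have hcov : IsVertexCover G Fmᶜ := by
      intro a b hadj
      by_contra h
      push_neg at h
      simp only [Finset.mem_compl, not_not] at h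
      exact hFm h.1 h.2 hadj
    have hmem : Fmᶜ.card ∈ {k | ∃ C : Finset V, IsVertexCover G C ∧ C.card = k} :=
      ⟨Fmᶜ, hcov, rfl⟩
    have := Nat.sInf_le hmem
    rwa [Finset.card_compl, hFmcard] at this
  have h3 : indepNumber G ≤ Fintype.card V := by
    unfold indepNumber; rw [← hFmcard]; exact Finset.card_le_univ Fm
  have h4 : coverNumber G ≤ Fintype.card V := by
    unfold coverNumber; rw [← hCcard]; exact Finset.card_le_univ C
  omega

/-- In a well-covered graph with a τ-reduction, every maximal stable set `F` satisfies
`|F ∩ V(Gᵢ)| = α(Gᵢ)` for each part. -/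
theorem card_inter_eq_indepNumber_of_tauReduction {V : Type*} [Fintype V] [DecidableEq V]
    (G : SimpleGraph V) {s : ℕ} (P : Fin s → Finset V)
    (hdisj : ∀ i j : Fin s, i ≠ j → Disjoint (P i) (P j))
    (hcover : Finset.univ.biUnion P = Finset.univ)
    (hτ : coverNumber G = ∑ i : Fin s, coverNumber (G.induce (P i : Set V)))
    (hwc : ∀ F : Finset V, IsMaximalStableSet G F → F.card = indepNumber G)
    (F : Finset V) (hF : IsMaximalStableSet G F) :
    ∀ i : Fin s, (F ∩ P i).card = indepNumber (G.induce (P i : Set V)) := by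
  classical
  -- each F ∩ P i maps to a stable set in the induced subgraph
  have key_le : ∀ i : Fin s, (F ∩ P i).card ≤ indepNumber (G.induce (P i : Set V)) := by
    intro i
    set F' : Finset ((P i : Set V)) := F.subtype (fun x => x ∈ (P i : Set V)) with hF'
    have hstab : IsStableSet (G.induce (P i : Set V)) F' := by
      intro a b ha hb hadj
      simp only [hF', Finset.mem_subtype] at ha hb
      exact hF.1 ha hb hadj
    have hcard : F'.card = (F ∩ P i).card := by
      rw [hF', Finset.card_subtype, ← Finset.filter_mem_eq_inter]
      congr 1
    calc (F ∩ P i).card = F'.card := hcard.symm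
      _ ≤ _ := stable_card_le_indep _ _ hstab
  -- the sum of the cards equals |F|
  have hFeq : F = Finset.univ.biUnion (fun i => F ∩ P i) := by
    ext x
    simp only [Finset.mem_biUnion, Finset.mem_inter, Finset.mem_univ, true_and]
    constructor
    · intro hx
      have : x ∈ Finset.univ.biUnion P := by rw [hcover]; exact Finset.mem_univ x
      obtain ⟨i, _, hi⟩ := Finset.mem_biUnion.mp this
      exact ⟨i, hx, hi⟩
    · rintro ⟨i, hx, _⟩; exact hx
  have hsumF : F.card = ∑ i : Fin s, (F ∩ P i).card := by
    conv_lhs => rw [hFeq]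
    exact Finset.card_biUnion fun i _ j _ hij =>
      Finset.disjoint_left.mpr fun x hx hx' =>
        (Finset.disjoint_left.mp (hdisj i j hij)) (Finset.mem_inter.mp hx).2
          (Finset.mem_inter.mp hx').2
  -- sum of part sizes equals |V|
  have hsumP : ∑ i : Fin s, (P i).card = Fintype.card V := by
    rw [← Finset.card_biUnion (fun i _ j _ hij => hdisj i j hij), hcover, Finset.card_univ]
  -- Gallai for each part
  have hgal : ∀ i : Fin s,
      indepNumber (G.induce (P i : Set V)) + coverNumber (G.induce (P i : Set V))
        = (P i).card := by
    intro i
    rw [gallai]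
    exact Fintype.card_coe (P i)
  have hgalG := gallai G
  have hsumα : ∑ i : Fin s, indepNumber (G.induce (P i : Set V)) = indepNumber G := by
    have := Finset.sum_congr rfl (fun i (_ : i ∈ Finset.univ) => hgal i)
    rw [Finset.sum_add_distrib] at this
    omega
  have hFcard := hwc F hF
  have hsum_eq : ∑ i : Fin s, (F ∩ P i).card
      = ∑ i : Fin s, indepNumber (G.induce (P i : Set V)) := by
    rw [← hsumF, hsumα, hFcard]
  intro i
  exact (Finset.sum_eq_sum_iff_of_le (fun i _ => key_le i)).mp hsum_eq i (Finset.mem_univ i)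
end

section
/- Let G be an unmixed finite simple graph with a τ-reduction G₁, …, G_s in which some Gᵢ is a single edge {x, x′}. Then {x, x′} has property (P): for every pair of edges {x, z} and {x′, z′} of G, the pair {z, z′} is an edge of G. -/
/-- A minimal vertex cover. -/
def IsMinimalVertexCover {V : Type*} (G : SimpleGraph V) (C : Finset V) : Prop :=
  IsVertexCover G C ∧ ∀ C' : Finset V, C' ⊂ C → ¬ IsVertexCover G C'

namespace IsVertexCover

variable {V : Type*} {G : SimpleGraph V} {C : Finset V}

theorem mem_of_adj_of_notMem (hC : IsVertexCover G C) {a b : V} (hab : G.Adj a b)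
    (hb : b ∉ C) : a ∈ C :=
  (hC hab).resolve_right hb

theorem exists_isMinimalVertexCover_subset (hC : IsVertexCover G C) :
    ∃ C' ⊆ C, IsMinimalVertexCover G C' := by
  obtain ⟨C', hC'C, hmin⟩ := exists_minimal_le_of_wellFoundedLT (IsVertexCover G) C hC
  exact ⟨C', hC'C, hmin.prop, fun D hD hDcover => hD.not_ge (hmin.le_of_le hDcover hD.le)⟩

end IsVertexCover

theorem IsStableSet.isVertexCover_compl {V : Type*} [Fintype V] [DecidableEq V]
    {G : SimpleGraph V} {F : Finset V} (hF : IsStableSet G F) : IsVertexCover G Fᶜ := by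
  intro a b hab
  simp only [Finset.mem_compl, ← not_and_or]
  exact fun ⟨ha, hb⟩ => hF ha hb hab

theorem isStableSet_pair {V : Type*} [DecidableEq V] {G : SimpleGraph V} {a b : V}
    (hab : ¬ G.Adj a b) : IsStableSet G {a, b} := by
  intro u v hu hv huv
  simp only [Finset.mem_insert, Finset.mem_singleton] at hu hv
  rcases hu with rfl | rfl <;> rcases hv with rfl | rfl
  exacts [huv.ne rfl, hab huv, hab huv.symm, huv.ne rfl]

section CoverNumber

variable {V : Type*} {G : SimpleGraph V}

theorem coverNumber_le_card [Fintype V] {C : Finset V} (hC : IsVertexCover G C) :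
    coverNumber G ≤ C.card :=
  Nat.sInf_le ⟨C, hC, rfl⟩

theorem coverNumber_lt_card [Fintype V] [Nonempty V] : coverNumber G < Fintype.card V := by
  classical
  obtain ⟨v⟩ := ‹Nonempty V›
  have hcover : IsVertexCover G (Finset.univ.erase v) := by
    intro a b hab
    simp only [Finset.mem_erase, Finset.mem_univ, and_true]
    by_contra! h
    exact hab.ne (h.1.trans h.2.symm)
  calc coverNumber G ≤ (Finset.univ.erase v).card := coverNumber_le_card hcover
    _ < Fintype.card V := Finset.card_erase_lt_of_mem (Finset.mem_univ v)

theorem coverNumber_induce_lt_card {S : Finset V} (hS : S.Nonempty) :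
    coverNumber (G.induce (S : Set V)) < S.card := by
  have : Nonempty (S : Set V) := hS.to_set.to_subtype
  simpa using coverNumber_lt_card (G := G.induce (S : Set V))

theorem coverNumber_induce_le_card_inter [DecidableEq V] {C : Finset V}
    (hC : IsVertexCover G C) (S : Finset V) :
    coverNumber (G.induce (S : Set V)) ≤ (S ∩ C).card := by
  have hcover : IsVertexCover (G.induce (S : Set V)) (C.subtype (· ∈ (S : Set V))) := by
    intro a b hab
    simp only [Finset.mem_subtype]
    exact hC hab
  calc coverNumber (G.induce (S : Set V)) ≤ (C.subtype (· ∈ (S : Set V))).card :=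
        coverNumber_le_card hcover
    _ = (S ∩ C).card := by
        simp [Finset.card_subtype, Finset.filter_mem_eq_inter, Finset.inter_comm]

theorem card_eq_sum_card_inter [Fintype V] [DecidableEq V] {ι : Type*} [Fintype ι]
    {P : ι → Finset V} (hdisj : Pairwise fun i j => Disjoint (P i) (P j))
    (hcover : Finset.univ.biUnion P = Finset.univ) (C : Finset V) :
    C.card = ∑ i, (P i ∩ C).card := by
  rw [← Finset.card_biUnion fun i _ j _ hij => (hdisj hij).mono Finset.inter_subset_left
    Finset.inter_subset_left, ← Finset.biUnion_inter, hcover, Finset.univ_inter]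

theorem card_inter_eq_coverNumber_induce [Fintype V] [DecidableEq V] {ι : Type*} [Fintype ι]
    {P : ι → Finset V} (hdisj : Pairwise fun i j => Disjoint (P i) (P j))
    (hcover : Finset.univ.biUnion P = Finset.univ)
    (hτ : coverNumber G = ∑ i, coverNumber (G.induce (P i : Set V)))
    {C : Finset V} (hC : IsVertexCover G C) (hCcard : C.card = coverNumber G) (i : ι) :
    (P i ∩ C).card = coverNumber (G.induce (P i : Set V)) := by
  have hle : ∀ j ∈ Finset.univ, coverNumber (G.induce (P j : Set V)) ≤ (P j ∩ C).card :=
    fun j _ => coverNumber_induce_le_card_inter hC (P j)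
  have hsum : ∑ j, coverNumber (G.induce (P j : Set V)) = ∑ j, (P j ∩ C).card := by
    rw [← hτ, ← hCcard, card_eq_sum_card_inter hdisj hcover]
  exact ((Finset.sum_eq_sum_iff_of_le hle).mp hsum i (Finset.mem_univ i)).symm

end CoverNumber

theorem propertyP_of_edge_in_tauReduction_general {V : Type*} [Fintype V] [DecidableEq V]
    (G : SimpleGraph V) {s : ℕ} (P : Fin s → Finset V)
    (hdisj : ∀ i j : Fin s, i ≠ j → Disjoint (P i) (P j))
    (hcover : Finset.univ.biUnion P = Finset.univ)
    (hτ : coverNumber G = ∑ i : Fin s, coverNumber (G.induce (P i : Set V)))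
    (hunmixed : ∀ C : Finset V, IsMinimalVertexCover G C → C.card = coverNumber G)
    (i₀ : Fin s) (x x' : V) (hP : P i₀ = {x, x'}) :
    ∀ z z' : V, G.Adj x z → G.Adj x' z' → G.Adj z z' := by
  intro z z' hxz hx'z'
  by_contra hzz'
  obtain ⟨C, hCzz', hC⟩ :=
    (isStableSet_pair hzz').isVertexCover_compl.exists_isMinimalVertexCover_subset
  have hz : z ∉ C := fun hz => Finset.mem_compl.mp (hCzz' hz) (by simp)
  have hz' : z' ∉ C := fun hz' => Finset.mem_compl.mp (hCzz' hz') (by simp)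
  have hPC : P i₀ ⊆ C := hP ▸ Finset.insert_subset (hC.1.mem_of_adj_of_notMem hxz hz)
    (Finset.singleton_subset_iff.mpr (hC.1.mem_of_adj_of_notMem hx'z' hz'))
  have hcard := card_inter_eq_coverNumber_induce (fun i j => hdisj i j) hcover hτ hC.1
    (hunmixed C hC) i₀
  rw [Finset.inter_eq_left.mpr hPC] at hcard
  exact (coverNumber_induce_lt_card (hP ▸ Finset.insert_nonempty x {x'})).ne' hcard

/-- If `G` is unmixed, with a τ-reduction one of whose parts is a single edge `{x, x′}`,
then the edge `{x, x′}` has property (P). -/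
theorem propertyP_of_edge_in_tauReduction {V : Type*} [Fintype V] [DecidableEq V]
    (G : SimpleGraph V) {s : ℕ} (P : Fin s → Finset V)
    (hdisj : ∀ i j : Fin s, i ≠ j → Disjoint (P i) (P j))
    (hcover : Finset.univ.biUnion P = Finset.univ)
    (hτ : coverNumber G = ∑ i : Fin s, coverNumber (G.induce (P i : Set V)))
    (hunmixed : ∀ C : Finset V, IsMinimalVertexCover G C → C.card = coverNumber G)
    (i₀ : Fin s) (x x' : V) (hP : P i₀ = {x, x'}) (hxx' : G.Adj x x') :
    ∀ z z' : V, G.Adj x z → G.Adj x' z' → G.Adj z z' :=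
  propertyP_of_edge_in_tauReduction_general G P hdisj hcover hτ hunmixed i₀ x x' hP
end

section
/- With B as above, if w = (w̃, b) ∈ ℕB satisfies |w̃| = 2b (sum of entries of w̃ equals 2b), then w is a nonnegative integer combination of the vectors (v₁,1), …, (v_q,1) alone. -/
/-!
The map `(w̃, b) ↦ 2b - |w̃|` is additive, takes the value `1` on each `(eᵢ, 1)`, `0` on each
`(v, 1)` and `2` on `e_{n+1}`. Being nonnegative on the generators, it can vanish on a sum of
generators only if it vanishes on every summand, i.e. only if every summand is an edge vector.
-/

/-- The set `B = {(e₁,1),…,(e_n,1)} ∪ {(v,1) : v edge characteristic vector} ∪ {e_{n+1}}`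
inside `ℕⁿ × ℕ`. -/
def graphGenSet (n : ℕ) (G : SimpleGraph (Fin n)) : Set ((Fin n → ℕ) × ℕ) :=
  {p | ∃ i : Fin n, p = (Pi.single i 1, 1)} ∪
  {p | ∃ a b : Fin n, G.Adj a b ∧ p = (Pi.single a 1 + Pi.single b 1, 1)} ∪
  {((0 : Fin n → ℕ), 1)}

namespace AddSubmonoid

variable {M N : Type*} [AddMonoid M] [AddCommMonoid N] [PartialOrder N] [IsOrderedAddMonoid N]

theorem mem_closure_zero_fiber_of_nonneg (φ : M →+ N) {S : Set M} (hS : ∀ s ∈ S, 0 ≤ φ s)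
    {x : M} (hx : x ∈ closure S) (hφx : φ x = 0) : x ∈ closure {s ∈ S | φ s = 0} := by
  suffices 0 ≤ φ x ∧ (φ x = 0 → x ∈ closure {s ∈ S | φ s = 0}) from this.2 hφx
  clear hφx
  induction hx using closure_induction with
  | mem s hs => exact ⟨hS s hs, fun h => subset_closure ⟨hs, h⟩⟩
  | zero => exact ⟨by simp, fun _ => zero_mem _⟩
  | add a b _ _ iha ihb =>
    refine ⟨by simpa using add_nonneg iha.1 ihb.1, fun h => ?_⟩
    rw [map_add, add_eq_zero_iff_of_nonneg iha.1 ihb.1] at h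
    exact add_mem (iha.2 h.1) (ihb.2 h.2)

end AddSubmonoid

section GraphGenSet

def degreeDefect (n : ℕ) : ((Fin n → ℕ) × ℕ) →+ ℤ where
  toFun w := 2 * (w.2 : ℤ) - ∑ i, (w.1 i : ℤ)
  map_zero' := by simp
  map_add' a b := by
    simp only [Prod.snd_add, Prod.fst_add, Pi.add_apply, Nat.cast_add, Finset.sum_add_distrib]
    ring

variable {n : ℕ}

def edgeGenSet (G : SimpleGraph (Fin n)) : Set ((Fin n → ℕ) × ℕ) :=
  {p | ∃ a b : Fin n, G.Adj a b ∧ p = (Pi.single a 1 + Pi.single b 1, 1)}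

theorem degreeDefect_apply (w : (Fin n → ℕ) × ℕ) :
    degreeDefect n w = 2 * (w.2 : ℤ) - ∑ i, (w.1 i : ℤ) :=
  rfl

theorem degreeDefect_eq_zero_iff (w : (Fin n → ℕ) × ℕ) :
    degreeDefect n w = 0 ↔ ∑ i, w.1 i = 2 * w.2 := by
  rw [degreeDefect_apply, sub_eq_zero, ← Nat.cast_sum]
  norm_cast
  exact eq_comm

theorem degreeDefect_vertex (i : Fin n) : degreeDefect n (Pi.single i 1, 1) = 1 := by
  simp [degreeDefect_apply, Pi.single_apply]

theorem degreeDefect_edge (a b : Fin n) :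
    degreeDefect n (Pi.single a 1 + Pi.single b 1, 1) = 0 := by
  simp [degreeDefect_apply, Pi.single_apply, Finset.sum_add_distrib]

theorem degreeDefect_nonneg_of_mem_graphGenSet (G : SimpleGraph (Fin n))
    {p : (Fin n → ℕ) × ℕ} (hp : p ∈ graphGenSet n G) : 0 ≤ degreeDefect n p := by
  rcases hp with (⟨i, rfl⟩ | ⟨a, b, -, rfl⟩) | rfl
  · rw [degreeDefect_vertex]; exact zero_le_one
  · rw [degreeDefect_edge]
  · simp [degreeDefect_apply]

theorem mem_edgeGenSet_of_degreeDefect_eq_zero (G : SimpleGraph (Fin n))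
    {p : (Fin n → ℕ) × ℕ} (hp : p ∈ graphGenSet n G) (h0 : degreeDefect n p = 0) :
    p ∈ edgeGenSet G := by
  rcases hp with (⟨i, rfl⟩ | hp) | rfl
  · rw [degreeDefect_vertex] at h0; exact absurd h0 one_ne_zero
  · exact hp
  · simp [degreeDefect_apply] at h0

end GraphGenSet

/-- If `w = (w̃, b) ∈ ℕB` with `|w̃| = 2b`, then `w` is a nonnegative integer combination
of the vectors `(v₁,1), …, (v_q,1)` alone. -/
theorem mem_edge_submonoid_of_sum_eq_two_mul (n : ℕ) (G : SimpleGraph (Fin n))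
    (w : (Fin n → ℕ) × ℕ) (hw : w ∈ AddSubmonoid.closure (graphGenSet n G))
    (hsum : ∑ i : Fin n, w.1 i = 2 * w.2) :
    w ∈ AddSubmonoid.closure
      {p : (Fin n → ℕ) × ℕ | ∃ a b : Fin n, G.Adj a b ∧ p = (Pi.single a 1 + Pi.single b 1, 1)} := by
  have hzero : w ∈ AddSubmonoid.closure {p ∈ graphGenSet n G | degreeDefect n p = 0} :=
    AddSubmonoid.mem_closure_zero_fiber_of_nonneg (degreeDefect n)
      (fun _ => degreeDefect_nonneg_of_mem_graphGenSet G) hw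
      ((degreeDefect_eq_zero_iff w).2 hsum)
  exact AddSubmonoid.closure_mono
    (fun p hp => mem_edgeGenSet_of_degreeDefect_eq_zero G hp.1 hp.2) hzero
end

section
/- Let C = (y₁, …, y_k) be an odd cycle (k odd) in a graph G with x₁ the common vertex of y₁ and y_k, and let 1_C = Σ_{xᵢ ∈ V(C)} eᵢ ∈ ℤⁿ. Then (1_C, (k+1)/2) = Σ_{i even, 1 ≤ i ≤ k} (vᵢ, 1) + (e₁, 1), where vᵢ is the characteristic vector of yᵢ; in particular (1_C, (k+1)/2) ∈ ℕB. -/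
lemma card_odd_range (k : ℕ) : ((Finset.range k).filter (fun i => Odd i)).card = k / 2 := by
  induction k with
  | zero => simp
  | succ k ih =>
    rw [Finset.range_add_one, Finset.filter_insert]
    by_cases h : Odd k
    · rw [if_pos h, Finset.card_insert_of_notMem (by simp)]
      rw [Nat.odd_iff] at h; omega
    · rw [if_neg h]
      rw [Nat.not_odd_iff_even, Nat.even_iff] at h; omega

/-- For an odd cycle `C = (x 0, x 1, …, x (k-1))` in `G` (with `x 0` the common vertex of
the first and last edges), `(1_C, (k+1)/2)` equals the sum of `(vⱼ, 1)` over the edges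
`yⱼ = {x j, x (j+1)}` with `j` odd (the even-numbered edges in 1-based indexing), plus
`(e_{x 0}, 1)`; in particular `(1_C, (k+1)/2) ∈ ℕB`. -/
theorem oddCycle_vector_decomposition {n k : ℕ} [NeZero k]
    (hk : Odd k) (hk3 : 3 ≤ k) (G : SimpleGraph (Fin n))
    (x : Fin k → Fin n) (hinj : Function.Injective x)
    (hadj : ∀ i : Fin k, G.Adj (x i) (x (i + 1))) :
    ((∑ i : Fin k, Pi.single (x i) 1, (k + 1) / 2) : (Fin n → ℕ) × ℕ)
        = (∑ j ∈ Finset.univ.filter (fun j : Fin k => Odd (j : ℕ)),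
            ((Pi.single (x j) 1 + Pi.single (x (j + 1)) 1, 1) : (Fin n → ℕ) × ℕ))
          + (Pi.single (x 0) 1, 1)
      ∧ ((∑ i : Fin k, Pi.single (x i) 1, (k + 1) / 2) : (Fin n → ℕ) × ℕ)
          ∈ AddSubmonoid.closure (graphGenSet n G) := by
  classical
  obtain ⟨l, hl⟩ := hk
  set A : Finset (Fin k) := Finset.univ.filter (fun j : Fin k => Odd (j : ℕ)) with hA
  set B : Finset (Fin k) := Finset.univ.filter (fun i : Fin k => Even (i : ℕ) ∧ i ≠ 0) with hB
  have hk1 : 1 % k = 1 := Nat.mod_eq_of_lt (by omega)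
  have hval : ∀ j ∈ A, ((j + 1 : Fin k) : ℕ) = (j : ℕ) + 1 := by
    intro j hj
    simp only [hA, Finset.mem_filter, Finset.mem_univ, true_and] at hj
    obtain ⟨m, hm⟩ := hj
    have hjk := j.isLt
    rw [Fin.add_def, Fin.val_one', hk1]
    exact Nat.mod_eq_of_lt (by omega)
  have himg : A.image (· + 1) = B := by
    ext i
    simp only [Finset.mem_image, hB, Finset.mem_filter, Finset.mem_univ, true_and]
    constructor
    · rintro ⟨j, hj, rfl⟩
      have h1 := hval j hj
      simp only [hA, Finset.mem_filter, Finset.mem_univ, true_and] at hj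
      refine ⟨by rw [h1]; exact hj.add_one, ?_⟩
      intro h0
      rw [h0] at h1
      simp at h1
    · rintro ⟨he, h0⟩
      have hne : (i : ℕ) ≠ 0 := fun h => h0 (Fin.ext (by simp [h]))
      have hi2 : 2 ≤ (i : ℕ) := by
        obtain ⟨m, hm⟩ := he; omega
      have hlt : (i : ℕ) - 1 < k := by have := i.isLt; omega
      have hjmem : (⟨(i : ℕ) - 1, hlt⟩ : Fin k) ∈ A := by
        simp only [hA, Finset.mem_filter, Finset.mem_univ, true_and]
        obtain ⟨m, hm⟩ := he
        exact ⟨m - 1, by omega⟩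
      refine ⟨_, hjmem, Fin.ext ?_⟩
      rw [hval _ hjmem]
      simp; omega
  have hsplit : ∀ g : Fin k → (Fin n → ℕ),
      ∑ i : Fin k, g i = ∑ j ∈ A, g j + ∑ i ∈ B, g i + g 0 := by
    intro g
    have h0mem : (0 : Fin k) ∈ Finset.univ.filter (fun i : Fin k => ¬ Odd (i : ℕ)) := by
      simp
    have herase : (Finset.univ.filter (fun i : Fin k => ¬ Odd (i : ℕ))).erase 0 = B := by
      ext i
      simp only [Finset.mem_erase, Finset.mem_filter, Finset.mem_univ, true_and, hB,
        Nat.not_odd_iff_even]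
      tauto
    rw [← Finset.sum_filter_add_sum_filter_not Finset.univ (fun i : Fin k => Odd (i : ℕ)) g,
      ← Finset.add_sum_erase _ g h0mem, herase, ← hA]
    ring
  have hinj1 : ∀ a ∈ A, ∀ b ∈ A, a + 1 = b + 1 → a = b := by
    intro a _ b _ h
    exact add_left_injective 1 h
  have hfst : ∑ i : Fin k, (Pi.single (x i) 1 : Fin n → ℕ)
      = ∑ j ∈ A, ((Pi.single (x j) 1 : Fin n → ℕ) + Pi.single (x (j + 1)) 1)
        + Pi.single (x 0) 1 := by
    rw [Finset.sum_add_distrib]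
    have h2 : ∑ j ∈ A, (Pi.single (x (j + 1)) 1 : Fin n → ℕ)
        = ∑ i ∈ B, (Pi.single (x i) 1 : Fin n → ℕ) := by
      rw [← himg, Finset.sum_image hinj1]
    rw [h2, hsplit (fun i => Pi.single (x i) 1)]
  have hcard : A.card = k / 2 := by
    rw [← card_odd_range k]
    refine Finset.card_bij (fun j _ => (j : ℕ)) ?_ ?_ ?_
    · intro j hj
      simp only [hA, Finset.mem_filter, Finset.mem_univ, true_and] at hj
      simp [Finset.mem_filter, j.isLt, hj]
    · intro a _ b _ h
      exact Fin.ext h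
    · intro i hi
      simp only [Finset.mem_filter, Finset.mem_range] at hi
      exact ⟨⟨i, hi.1⟩, by simp [hA, Finset.mem_filter, hi.2], rfl⟩
  have heq : ((∑ i : Fin k, Pi.single (x i) 1, (k + 1) / 2) : (Fin n → ℕ) × ℕ)
      = (∑ j ∈ A, ((Pi.single (x j) 1 + Pi.single (x (j + 1)) 1, 1) : (Fin n → ℕ) × ℕ))
        + (Pi.single (x 0) 1, 1) := by
    refine Prod.ext ?_ ?_
    · simpa [Prod.fst_sum] using hfst
    · simp only [Prod.snd_sum, Prod.snd_add, Finset.sum_const, smul_eq_mul, mul_one]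
      rw [hcard]; omega
  refine ⟨heq, ?_⟩
  rw [heq]
  refine AddSubmonoid.add_mem _ (AddSubmonoid.sum_mem _ fun j _ => ?_) ?_
  · exact AddSubmonoid.subset_closure (Or.inl (Or.inr ⟨x j, x (j + 1), hadj j, rfl⟩))
  · exact AddSubmonoid.subset_closure (Or.inl (Or.inl ⟨x 0, rfl⟩))
end

section
/- Suppose a graph G on n vertices (n even) admits a τ-reduction into s = n/2 disjoint edges y₁,…,y_s whose vertex sets partition V(G). If G contains an odd cycle C with k vertices, then the vector w − (1, n/2 + 1), where w = Σᵢ(vᵢ,1) + (1_C,(k+1)/2) and 1 = (1,…,1), equals (1_C, (k−1)/2), and this vector has coordinate sum |1_C| = k > 2·(k−1)/2; hence (1_C,(k−1)/2) ∉ ℕB. -/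
/-!
The matching edges sum to `(1, n/2)`, so subtracting `(1, n/2 + 1)` leaves `(1_C, (k-1)/2)`.
Each generator in `B` has coordinate sum at most twice its last coordinate, a condition that is
preserved under addition, so all of `ℕB` satisfies it; `(1_C, (k-1)/2)` does not, since `k` is
odd.
-/

/-- The set `B = {(e₁,1),…,(e_n,1)} ∪ {(v,1) : v edge characteristic vector} ∪ {e_{n+1}}`
inside `ℤⁿ × ℤ`. -/
def graphGenSetZ (n : ℕ) (G : SimpleGraph (Fin n)) : Set ((Fin n → ℤ) × ℤ) :=
  {p | ∃ i : Fin n, p = (Pi.single i 1, 1)} ∪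
  {p | ∃ a b : Fin n, G.Adj a b ∧ p = (Pi.single a 1 + Pi.single b 1, 1)} ∪
  {((0 : Fin n → ℤ), 1)}

open Finset

def degreeBounded (ι : Type*) [Fintype ι] : AddSubmonoid ((ι → ℤ) × ℤ) where
  carrier := {p | ∑ j, p.1 j ≤ 2 * p.2}
  zero_mem' := by simp
  add_mem' {p q} hp hq := by
    simp only [Set.mem_ofPred_eq, Prod.fst_add, Prod.snd_add, Pi.add_apply, sum_add_distrib] at *
    linarith

lemma graphGenSetZ_subset_degreeBounded {n : ℕ} (G : SimpleGraph (Fin n)) :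
    graphGenSetZ n G ⊆ degreeBounded (Fin n) := by
  rintro p ((⟨i, rfl⟩ | ⟨u, v, -, rfl⟩) | rfl) <;>
    simp [degreeBounded, sum_add_distrib]

lemma sum_fst_le_two_mul_snd_of_mem_closure_graphGenSetZ {n : ℕ} {G : SimpleGraph (Fin n)}
    {p : (Fin n → ℤ) × ℤ} (hp : p ∈ AddSubmonoid.closure (graphGenSetZ n G)) :
    ∑ j, p.1 j ≤ 2 * p.2 :=
  AddSubmonoid.closure_le.mpr (graphGenSetZ_subset_degreeBounded G) hp

section

variable {ι V R : Type*} [Fintype ι] [DecidableEq V] [AddCommMonoidWithOne R]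

lemma sum_apply_sum_single_one [Fintype V] (x : ι → V) :
    ∑ j, (∑ i, Pi.single (x i) (1 : R) : V → R) j = Fintype.card ι := by
  simp only [Finset.sum_apply]
  rw [sum_comm]
  simp [sum_pi_single']

lemma single_add_single_apply_of_ne {u v : V} (huv : u ≠ v) (j : V) :
    (Pi.single u 1 + Pi.single v 1 : V → R) j = if j ∈ ({u, v} : Finset V) then 1 else 0 := by
  by_cases hu : j = u
  · subst hu; simp [huv]
  · by_cases hv : j = v
    · subst hv; simp [hu]
    · simp [hu, hv]

lemma sum_single_add_single_eq_one [Fintype V] (a b : ι → V) (hab : ∀ i, a i ≠ b i)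
    (hdisj : ∀ i j, i ≠ j → Disjoint ({a i, b i} : Finset V) {a j, b j})
    (hcover : univ.biUnion (fun i => ({a i, b i} : Finset V)) = univ) :
    ∑ i, (Pi.single (a i) 1 + Pi.single (b i) 1 : V → R) = fun _ => 1 := by
  funext j
  obtain ⟨i₀, -, hi₀⟩ := mem_biUnion.mp (hcover ▸ mem_univ j)
  have hother : ∀ i, i ≠ i₀ → j ∉ ({a i, b i} : Finset V) := fun i hi hj =>
    disjoint_left.mp (hdisj i i₀ hi) hj hi₀
  rw [Finset.sum_apply, sum_eq_single i₀ (fun i _ hi => ?_) (by simp)]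
  · simp [single_add_single_apply_of_ne (hab i₀), hi₀]
  · simp [single_add_single_apply_of_ne (hab i), hother i hi]

end

theorem oddCycle_vector_not_mem_NB_general {n k : ℕ}
    (hk : Odd k) (G : SimpleGraph (Fin n))
    (a b : Fin (n / 2) → Fin n) (hab : ∀ i, G.Adj (a i) (b i))
    (hdisj : ∀ i j : Fin (n / 2), i ≠ j →
      Disjoint ({a i, b i} : Finset (Fin n)) {a j, b j})
    (hcover : (Finset.univ.biUnion fun i : Fin (n / 2) => ({a i, b i} : Finset (Fin n)))
        = Finset.univ)
    (x : Fin k → Fin n) :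
    ((∑ i : Fin (n / 2),
        ((Pi.single (a i) 1 + Pi.single (b i) 1, 1) : (Fin n → ℤ) × ℤ))
      + (∑ i : Fin k, Pi.single (x i) 1, (((k + 1) / 2 : ℕ) : ℤ)))
      - ((fun _ : Fin n => 1, ((n / 2 : ℕ) : ℤ) + 1) : (Fin n → ℤ) × ℤ)
      = (∑ i : Fin k, Pi.single (x i) 1, (((k - 1) / 2 : ℕ) : ℤ))
    ∧ (∑ j : Fin n, (∑ i : Fin k, Pi.single (x i) 1 : Fin n → ℤ) j) = (k : ℤ)
    ∧ (k : ℤ) > 2 * (((k - 1) / 2 : ℕ) : ℤ)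
    ∧ ((∑ i : Fin k, Pi.single (x i) 1, (((k - 1) / 2 : ℕ) : ℤ)) : (Fin n → ℤ) × ℤ)
        ∉ AddSubmonoid.closure (graphGenSetZ n G) := by
  have hones := sum_single_add_single_eq_one (R := ℤ) a b (fun i => (hab i).ne) hdisj hcover
  have hsum : ∑ j, (∑ i : Fin k, Pi.single (x i) 1 : Fin n → ℤ) j = k := by
    simpa using sum_apply_sum_single_one (R := ℤ) x
  have hhalf := Nat.two_mul_div_two_add_one_of_odd hk
  have hlt : (k : ℤ) > 2 * (((k - 1) / 2 : ℕ) : ℤ) := by omega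
  refine ⟨Prod.ext ?_ ?_, hsum, hlt, fun hmem => ?_⟩
  · simp [Prod.fst_sum, hones]
  · simp only [Prod.snd_sub, Prod.snd_add, Prod.snd_sum, sum_const, card_univ, Fintype.card_fin,
      nsmul_eq_mul, mul_one]
    omega
  · have := sum_fst_le_two_mul_snd_of_mem_closure_graphGenSetZ hmem
    simp only [hsum] at this
    omega

/-- Suppose `G` on `n` vertices (`n` even) has a τ-reduction into `s = n/2` disjoint edges
`y₁,…,y_s` partitioning `V(G)`, and `G` contains an odd cycle `C` with `k` vertices.  Then
with `w = Σᵢ(vᵢ,1) + (1_C,(k+1)/2)`, we have `w − (1, n/2 + 1) = (1_C, (k−1)/2)`, this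
vector has coordinate sum `|1_C| = k > 2·((k−1)/2)`, and hence `(1_C,(k−1)/2) ∉ ℕB`. -/
theorem oddCycle_vector_not_mem_NB {n k : ℕ} [NeZero k]
    (hn : Even n) (hk : Odd k) (hk3 : 3 ≤ k) (G : SimpleGraph (Fin n))
    (a b : Fin (n / 2) → Fin n) (hab : ∀ i, G.Adj (a i) (b i))
    (hdisj : ∀ i j : Fin (n / 2), i ≠ j →
      Disjoint ({a i, b i} : Finset (Fin n)) {a j, b j})
    (hcover : (Finset.univ.biUnion fun i : Fin (n / 2) => ({a i, b i} : Finset (Fin n)))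
        = Finset.univ)
    (x : Fin k → Fin n) (hinj : Function.Injective x)
    (hadj : ∀ i : Fin k, G.Adj (x i) (x (i + 1))) :
    ((∑ i : Fin (n / 2),
        ((Pi.single (a i) 1 + Pi.single (b i) 1, 1) : (Fin n → ℤ) × ℤ))
      + (∑ i : Fin k, Pi.single (x i) 1, (((k + 1) / 2 : ℕ) : ℤ)))
      - ((fun _ : Fin n => 1, ((n / 2 : ℕ) : ℤ) + 1) : (Fin n → ℤ) × ℤ)
      = (∑ i : Fin k, Pi.single (x i) 1, (((k - 1) / 2 : ℕ) : ℤ))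
    ∧ (∑ j : Fin n, (∑ i : Fin k, Pi.single (x i) 1 : Fin n → ℤ) j) = (k : ℤ)
    ∧ (k : ℤ) > 2 * (((k - 1) / 2 : ℕ) : ℤ)
    ∧ ((∑ i : Fin k, Pi.single (x i) 1, (((k - 1) / 2 : ℕ) : ℤ)) : (Fin n → ℤ) × ℤ)
        ∉ AddSubmonoid.closure (graphGenSetZ n G) :=
  oddCycle_vector_not_mem_NB_general hk G a b hab hdisj hcover x
end

section
/- Let I = {x_{j₁},…,x_{j_d}} be a maximal stable set of a connected graph G on n vertices and set ℓ′ = Σᵢ e_{jᵢ} ∈ ℝⁿ. Then the cone ℝ₊B is contained in the halfspace {w ∈ ℝ^{n+1} : w · (−ℓ′, 1) ≥ 0}, and the set {(e_{j₁},1),…,(e_{j_d},1)} ∪ {(v,1) : v characteristic vector of an edge meeting I in exactly one vertex} contains n linearly independent vectors lying on the hyperplane {w : w · (−ℓ′,1) = 0}. -/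
open NNReal

/-- The set `B = {(e₁,1),…,(e_n,1)} ∪ {(v,1) : v edge characteristic vector} ∪ {e_{n+1}}`
inside `ℝⁿ × ℝ`. -/
def graphGenSetR (n : ℕ) (G : SimpleGraph (Fin n)) : Set ((Fin n → ℝ) × ℝ) :=
  {p | ∃ i : Fin n, p = (Pi.single i 1, 1)} ∪
  {p | ∃ a b : Fin n, G.Adj a b ∧ p = (Pi.single a 1 + Pi.single b 1, 1)} ∪
  {((0 : Fin n → ℝ), 1)}

/-!
The facet is cut out by `w ↦ w.2 - ∑_{i ∈ I} w.1 i`. Every generator of `ℝ₊B` has a last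
coordinate `1` and meets the stable set `I` in at most one vertex, so the functional is
nonnegative on the cone. By maximality every vertex `j ∉ I` has a neighbour `p j ∈ I`; the
vectors `(e_j, 1)` for `j ∈ I` and `(e_j + e_{p j}, 1)` for `j ∉ I` lie on the hyperplane, and
their first components span `ℝⁿ` (as `e_j = (e_j + e_{p j}) - e_{p j}`), so they are `n`
linearly independent vectors.
-/

open Finset

theorem Submodule.nonneg_of_mem_span_nnreal {M : Type*} [AddCommGroup M] [Module ℝ M]
    (φ : M →ₗ[ℝ] ℝ) {s : Set M} (hs : ∀ x ∈ s, 0 ≤ φ x) :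
    ∀ w ∈ span ℝ≥0 s, 0 ≤ φ w := by
  intro w hw
  induction hw using span_induction with
  | mem x hx => exact hs x hx
  | zero => simp
  | add x y _ _ hx hy => simpa using add_nonneg hx hy
  | smul c x _ hx => simpa [NNReal.smul_def] using mul_nonneg c.2 hx

section StableSet

variable {V : Type*} {G : SimpleGraph V} {I : Finset V}

theorem IsStableSet.exists_adj_of_maximal [DecidableEq V] (hstab : IsStableSet G I)
    (hmax : ∀ F : Finset V, I ⊂ F → ¬ IsStableSet G F) {j : V} (hj : j ∉ I) :
    ∃ i ∈ I, G.Adj j i := by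
  have h := hmax (insert j I) (ssubset_insert hj)
  simp only [IsStableSet, not_forall, not_not] at h
  obtain ⟨a, b, ha, hb, hab⟩ := h
  rcases mem_insert.1 ha with rfl | haI
  · rcases mem_insert.1 hb with rfl | hbI
    · exact absurd hab (G.loopless.irrefl _)
    · exact ⟨b, hbI, hab⟩
  · rcases mem_insert.1 hb with rfl | hbI
    · exact ⟨a, haI, hab.symm⟩
    · exact absurd hab (hstab haI hbI)

theorem IsStableSet.exists_neighbour_map [DecidableEq V] (hstab : IsStableSet G I)
    (hmax : ∀ F : Finset V, I ⊂ F → ¬ IsStableSet G F) :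
    ∃ p : V → V, ∀ j ∉ I, p j ∈ I ∧ G.Adj j (p j) := by
  have h : ∀ j, ∃ i, j ∉ I → i ∈ I ∧ G.Adj j i := fun j => by
    by_cases hj : j ∈ I
    · exact ⟨j, (absurd hj ·)⟩
    · obtain ⟨i, hi, hadj⟩ := hstab.exists_adj_of_maximal hmax hj
      exact ⟨i, fun _ => ⟨hi, hadj⟩⟩
  choose p hp using h
  exact ⟨p, hp⟩

end StableSet

noncomputable def facetFunctional {ι : Type*} (I : Finset ι) : ((ι → ℝ) × ℝ) →ₗ[ℝ] ℝ :=
  LinearMap.snd ℝ _ _ - ∑ i ∈ I, LinearMap.proj i ∘ₗ LinearMap.fst ℝ _ _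

theorem facetFunctional_apply {ι : Type*} (I : Finset ι) (w : (ι → ℝ) × ℝ) :
    facetFunctional I w = w.2 - ∑ i ∈ I, w.1 i := by
  simp [facetFunctional]

theorem IsStableSet.facetFunctional_nonneg {n : ℕ} {G : SimpleGraph (Fin n)}
    {I : Finset (Fin n)} (hstab : IsStableSet G I) {x : (Fin n → ℝ) × ℝ}
    (hx : x ∈ graphGenSetR n G) : 0 ≤ facetFunctional I x := by
  rw [facetFunctional_apply, sub_nonneg]
  rcases hx with (⟨i, rfl⟩ | ⟨a, b, hab, rfl⟩) | rfl
  · simp only [sum_pi_single']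
    split_ifs <;> norm_num
  · have : ¬ (a ∈ I ∧ b ∈ I) := fun ⟨ha, hb⟩ => hstab ha hb hab
    simp only [Pi.add_apply, sum_add_distrib, sum_pi_single']
    split_ifs <;> simp_all
  · simp

noncomputable def vertexOrEdgeVector {ι : Type*} [DecidableEq ι] (I : Finset ι) (p : ι → ι)
    (j : ι) : ι → ℝ :=
  if j ∈ I then Pi.single j 1 else Pi.single j 1 + Pi.single (p j) 1

section VertexOrEdgeVector

variable {ι : Type*} [DecidableEq ι] {I : Finset ι} {p : ι → ι}

theorem sum_vertexOrEdgeVector (hp : ∀ j ∉ I, p j ∈ I) (j : ι) :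
    ∑ i ∈ I, vertexOrEdgeVector I p j i = 1 := by
  by_cases hj : j ∈ I
  · simp [vertexOrEdgeVector, hj, sum_pi_single']
  · simp [vertexOrEdgeVector, hj, sum_add_distrib, sum_pi_single', hp j hj]

theorem linearIndependent_vertexOrEdgeVector [Fintype ι] (hp : ∀ j ∉ I, p j ∈ I) :
    LinearIndependent ℝ (vertexOrEdgeVector I p) := by
  set S := Submodule.span ℝ (Set.range (vertexOrEdgeVector I p))
  have hmem : ∀ j, vertexOrEdgeVector I p j ∈ S := fun j =>
    Submodule.subset_span (Set.mem_range_self j)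
  have hvertex : ∀ j ∈ I, Pi.single j 1 ∈ S := fun j hj => by
    simpa [vertexOrEdgeVector, hj] using hmem j
  have hsingle : ∀ j, Pi.single j 1 ∈ S := fun j => by
    by_cases hj : j ∈ I
    · exact hvertex j hj
    · have hedge : Pi.single j 1 + Pi.single (p j) 1 ∈ S := by
        simpa [vertexOrEdgeVector, hj] using hmem j
      simpa using S.sub_mem hedge (hvertex _ (hp j hj))
  refine linearIndependent_of_top_le_span_of_card_eq_finrank ?_ (by simp)
  rw [← (Pi.basisFun ℝ ι).span_eq, Submodule.span_le]
  rintro _ ⟨j, rfl⟩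
  simpa using hsingle j

end VertexOrEdgeVector

theorem maximalStable_gives_facet_general {n : ℕ} (G : SimpleGraph (Fin n))
    (I : Finset (Fin n)) (hstab : IsStableSet G I)
    (hmax : ∀ F : Finset (Fin n), I ⊂ F → ¬ IsStableSet G F) :
    (∀ w ∈ Submodule.span ℝ≥0 (graphGenSetR n G), ∑ i ∈ I, w.1 i ≤ w.2) ∧
      ∃ f : Fin n → (Fin n → ℝ) × ℝ, LinearIndependent ℝ f ∧
        ∀ j : Fin n,
          ((∃ i ∈ I, f j = (Pi.single i 1, 1)) ∨
            (∃ a b : Fin n, G.Adj a b ∧ (a ∈ I ↔ b ∉ I) ∧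
              f j = (Pi.single a 1 + Pi.single b 1, 1)))
          ∧ ∑ i ∈ I, (f j).1 i = (f j).2 := by
  refine ⟨fun w hw => ?_, ?_⟩
  · have h := Submodule.nonneg_of_mem_span_nnreal (facetFunctional I)
      (fun _ => hstab.facetFunctional_nonneg) w hw
    rwa [facetFunctional_apply, sub_nonneg] at h
  obtain ⟨p, hp⟩ := hstab.exists_neighbour_map hmax
  have hpI : ∀ j ∉ I, p j ∈ I := fun j hj => (hp j hj).1
  refine ⟨fun j => (vertexOrEdgeVector I p j, 1),
    (linearIndependent_vertexOrEdgeVector hpI).of_comp (LinearMap.fst ℝ _ _),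
    fun j => ⟨?_, sum_vertexOrEdgeVector hpI j⟩⟩
  by_cases hj : j ∈ I
  · exact Or.inl ⟨j, hj, by simp [vertexOrEdgeVector, hj]⟩
  · exact Or.inr ⟨j, p j, (hp j hj).2, by simp [hj, hpI j hj],
      by simp [vertexOrEdgeVector, hj]⟩

/-- For a maximal stable set `I` with `ℓ′ = Σ_{i∈I} eᵢ`, the cone `ℝ₊B` lies in the
halfspace `{w : w·(−ℓ′,1) ≥ 0}`, and among the vectors `(eᵢ,1)` (`i ∈ I`) and `(v,1)`
(`v` the characteristic vector of an edge meeting `I` in exactly one vertex) there are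
`n` linearly independent ones lying on the hyperplane `{w : w·(−ℓ′,1) = 0}`. -/
theorem maximalStable_gives_facet {n : ℕ} (G : SimpleGraph (Fin n)) (hconn : G.Connected)
    (I : Finset (Fin n)) (hstab : IsStableSet G I)
    (hmax : ∀ F : Finset (Fin n), I ⊂ F → ¬ IsStableSet G F) :
    (∀ w ∈ Submodule.span ℝ≥0 (graphGenSetR n G), ∑ i ∈ I, w.1 i ≤ w.2) ∧
      ∃ f : Fin n → (Fin n → ℝ) × ℝ, LinearIndependent ℝ f ∧
        ∀ j : Fin n,
          ((∃ i ∈ I, f j = (Pi.single i 1, 1)) ∨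
            (∃ a b : Fin n, G.Adj a b ∧ (a ∈ I ↔ b ∉ I) ∧
              f j = (Pi.single a 1 + Pi.single b 1, 1)))
          ∧ ∑ i ∈ I, (f j).1 i = (f j).2 :=
  maximalStable_gives_facet_general G I hstab hmax
end

section
/- Let y₁,…,y_u be pairwise disjoint edges of a graph G, each having property (P). Suppose w = (w̃,a) = Σ_{i=1}^q αᵢ(vᵢ,1) + Σ_{i=1}^n βᵢ(eᵢ,1) + λe_{n+1} with all αᵢ, βᵢ, λ ∈ ℕ, and that among all such representations of w, Σ_{i=1}^{u} αᵢ is maximal. Then for each k ∈ {1,…,u}, writing y_k = {x_{j₁}, x_{j₂}}, one has α_k = w̃·e_{j₁} or α_k = w̃·e_{j₂}. -/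
def HasPropertyP {V : Type*} (G : SimpleGraph V) (x x' : V) : Prop :=
  ∀ z z' : V, G.Adj x z → G.Adj x' z' → G.Adj z z'

def vrep {V : Type*} [DecidableEq V] {q : ℕ} (E1 E2 : Fin q → V) (i : Fin q) : (V → ℕ) × ℕ :=
  (Pi.single (E1 i) 1 + Pi.single (E2 i) 1, 1)

def vert {V : Type*} [DecidableEq V] (v : V) : (V → ℕ) × ℕ := (Pi.single v 1, 1)

lemma sum_indicator_smul {ι M : Type*} [Fintype ι] [DecidableEq ι] [AddCommMonoid M]
    (f : ι → M) (a : ι) : ∑ t, (if t = a then 1 else 0) • f t = f a := by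
  simp [ite_smul]

lemma sum_coeff_exchange {ι M : Type*} [Fintype ι] [AddCommMonoid M]
    (f : ι → M) (c d c' d' : ι → ℕ) (h : ∀ t, c t + d t = c' t + d' t) :
    ∑ t, c t • f t + ∑ t, d t • f t = ∑ t, c' t • f t + ∑ t, d' t • f t := by
  rw [← Finset.sum_add_distrib, ← Finset.sum_add_distrib]
  exact Finset.sum_congr rfl fun t _ => by rw [← add_smul, ← add_smul, h t]

lemma rep_swap {M : Type*} [AddCancelCommMonoid M] {A A' B B' C C' P Q R S T U : M}
    (hA : A' + P = A + Q) (hB : B' + R = B + S) (hC : C' + T = C + U)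
    (hkey : Q + S + U = P + R + T) : A' + B' + C' = A + B + C := by
  have h : (A' + B' + C') + (P + R + T) = (A + B + C) + (P + R + T) := by
    calc (A' + B' + C') + (P + R + T) = (A' + P) + (B' + R) + (C' + T) := by abel
    _ = (A + Q) + (B + S) + (C + U) := by rw [hA, hB, hC]
    _ = (A + B + C) + (Q + S + U) := by abel
    _ = (A + B + C) + (P + R + T) := by rw [hkey]
  exact add_right_cancel h

/-- Let `y₁,…,y_u` be pairwise disjoint edges of `G`, each with property (P).  If
`w = Σᵢ αᵢ(vᵢ,1) + Σᵢ βᵢ(eᵢ,1) + λ e_{n+1}` is a representation in which `Σ_{i<u} αᵢ` is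
maximal among all such representations of `w`, then for each `k < u`, writing
`y_k = {x_{j₁}, x_{j₂}}`, one has `α_k = w̃·e_{j₁}` or `α_k = w̃·e_{j₂}`. -/
theorem propertyP_maximal_representation {V : Type*} [Fintype V] [DecidableEq V]
    (G : SimpleGraph V) {q u : ℕ} (hu : u ≤ q)
    (E1 E2 : Fin q → V) (hE : ∀ i : Fin q, G.Adj (E1 i) (E2 i))
    (hEinj : Function.Injective (fun i : Fin q => s(E1 i, E2 i)))
    (hEall : ∀ a b : V, G.Adj a b → ∃ i : Fin q, s(E1 i, E2 i) = s(a, b))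
    (hdisj : ∀ i j : Fin q, i.val < u → j.val < u → i ≠ j →
      Disjoint ({E1 i, E2 i} : Finset V) {E1 j, E2 j})
    (hP : ∀ i : Fin q, i.val < u → HasPropertyP G (E1 i) (E2 i))
    (w : (V → ℕ) × ℕ) (α : Fin q → ℕ) (β : V → ℕ) (lam : ℕ)
    (hrep : w = (∑ i : Fin q, α i • ((Pi.single (E1 i) 1 + Pi.single (E2 i) 1, 1) : (V → ℕ) × ℕ))
        + (∑ v : V, β v • ((Pi.single v 1, 1) : (V → ℕ) × ℕ))
        + lam • (((0 : V → ℕ), 1) : (V → ℕ) × ℕ))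
    (hmaxl : ∀ (α' : Fin q → ℕ) (β' : V → ℕ) (lam' : ℕ),
      w = (∑ i : Fin q, α' i • ((Pi.single (E1 i) 1 + Pi.single (E2 i) 1, 1) : (V → ℕ) × ℕ))
          + (∑ v : V, β' v • ((Pi.single v 1, 1) : (V → ℕ) × ℕ))
          + lam' • (((0 : V → ℕ), 1) : (V → ℕ) × ℕ) →
        ∑ i ∈ Finset.univ.filter (fun i : Fin q => i.val < u), α' i
          ≤ ∑ i ∈ Finset.univ.filter (fun i : Fin q => i.val < u), α i) :
    ∀ k : Fin q, k.val < u → α k = w.1 (E1 k) ∨ α k = w.1 (E2 k) := by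
  intro k hk
  by_contra hcc
  push_neg at hcc
  obtain ⟨hca, hcb⟩ := hcc
  classical
  have hneqk : E1 k ≠ E2 k := (hE k).ne
  -- rephrase the representation and maximality hypotheses with `vrep`/`vert`
  have hrep2 : w = (∑ i : Fin q, α i • vrep E1 E2 i) + (∑ v : V, β v • vert v)
      + lam • (((0 : V → ℕ), 1) : (V → ℕ) × ℕ) := hrep
  have hmaxl2 : ∀ (α' : Fin q → ℕ) (β' : V → ℕ) (lam' : ℕ),
      w = (∑ i : Fin q, α' i • vrep E1 E2 i) + (∑ v : V, β' v • vert v)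
          + lam' • (((0 : V → ℕ), 1) : (V → ℕ) × ℕ) →
        ∑ i ∈ Finset.univ.filter (fun i : Fin q => i.val < u), α' i
          ≤ ∑ i ∈ Finset.univ.filter (fun i : Fin q => i.val < u), α i := hmaxl
  have hkF : k ∈ Finset.univ.filter (fun i : Fin q => i.val < u) :=
    Finset.mem_filter.mpr ⟨Finset.mem_univ k, hk⟩
  -- pointwise value of w.1
  have hval : ∀ x, w.1 x = (∑ i : Fin q,
      α i * ((if x = E1 i then 1 else 0) + (if x = E2 i then 1 else 0))) + β x := by
    intro x; rw [hrep]
    simp [Prod.fst_sum, Finset.sum_apply, Pi.single_apply, mul_ite, mul_add, Finset.sum_ite_eq]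
  -- excess extraction
  have excess : ∀ x : V, ((x = E1 k ∧ x ≠ E2 k) ∨ (x = E2 k ∧ x ≠ E1 k)) → α k ≠ w.1 x →
      1 ≤ β x ∨ ∃ i, i ≠ k ∧ 1 ≤ α i ∧ (E1 i = x ∨ E2 i = x) := by
    intro x hx hne
    by_contra hcon
    push_neg at hcon
    obtain ⟨hβ0, hα0⟩ := hcon
    apply hne
    rw [hval x]
    have hβx : β x = 0 := by omega
    have hrest : ∀ i ∈ Finset.univ \ {k},
        α i * ((if x = E1 i then 1 else 0) + (if x = E2 i then 1 else 0)) = 0 := by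
      intro i hi
      simp only [Finset.mem_sdiff, Finset.mem_singleton, Finset.mem_univ, true_and] at hi
      rcases Nat.eq_zero_or_pos (α i) with h0 | h1
      · simp [h0]
      · have h2 := hα0 i hi h1
        simp [h2.1.symm, h2.2.symm]
    rw [Finset.sum_eq_sum_sdiff_singleton_add (Finset.mem_univ k), Finset.sum_eq_zero hrest, hβx]
    rcases hx with ⟨h1, h2⟩ | ⟨h1, h2⟩ <;> simp [h1, h2, hneqk, hneqk.symm]
  -- helpers
  have endpoints : ∀ (i : Fin q) (x : V), (E1 i = x ∨ E2 i = x) →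
      ∃ zz, G.Adj x zz ∧ (Pi.single (E1 i) 1 + Pi.single (E2 i) (1:ℕ) : V → ℕ)
        = Pi.single x 1 + Pi.single zz 1 := by
    intro i x hx
    rcases hx with h | h
    · exact ⟨E2 i, h ▸ hE i, by rw [h]⟩
    · exact ⟨E1 i, h ▸ (hE i).symm, by rw [h, add_comm]⟩
  have edgek : ∀ i : Fin q, (E1 i = E1 k ∨ E2 i = E1 k) → (E1 i = E2 k ∨ E2 i = E2 k) →
      i = k := by
    intro i h1 h2
    apply hEinj
    show s(E1 i, E2 i) = s(E1 k, E2 k)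
    rw [Sym2.eq_iff]
    rcases h1 with h1 | h1 <;> rcases h2 with h2 | h2
    · exact absurd (h1.symm.trans h2) hneqk
    · exact Or.inl ⟨h1, h2⟩
    · exact Or.inr ⟨h2, h1⟩
    · exact absurd (h1.symm.trans h2) hneqk
  have notinF : ∀ j : Fin q, j ≠ k →
      ((E1 j = E1 k ∨ E2 j = E1 k) ∨ (E1 j = E2 k ∨ E2 j = E2 k)) → ¬ j.val < u := by
    intro j hjk hsh hju
    have hd := hdisj j k hju hk hjk
    rw [Finset.disjoint_left] at hd
    rcases hsh with (h | h) | (h | h)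
    · exact hd (by simp : E1 j ∈ ({E1 j, E2 j} : Finset V)) (by simp [h])
    · exact hd (by simp : E2 j ∈ ({E1 j, E2 j} : Finset V)) (by simp [h])
    · exact hd (by simp : E1 j ∈ ({E1 j, E2 j} : Finset V)) (by simp [h])
    · exact hd (by simp : E2 j ∈ ({E1 j, E2 j} : Finset V)) (by simp [h])
  have exA := excess (E1 k) (Or.inl ⟨rfl, hneqk⟩) hca
  have exB := excess (E2 k) (Or.inr ⟨rfl, hneqk.symm⟩) hcb
  rcases exA with hβa | ⟨i, hik, hαi, hi⟩ <;> rcases exB with hβb | ⟨j, hjk, hαj, hj⟩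
  · -- case β/β
    refine absurd (hmaxl2 (fun t => α t + (if t = k then 1 else 0))
        (fun v => β v - (if v = E1 k then 1 else 0) - (if v = E2 k then 1 else 0))
        (lam + 1) ?_) (not_le.mpr ?_)
    · rw [hrep2]
      have hA : (∑ t : Fin q, (α t + (if t = k then 1 else 0)) • vrep E1 E2 t)
          + (0 : (V → ℕ) × ℕ) = (∑ t : Fin q, α t • vrep E1 E2 t) + vrep E1 E2 k := by
        rw [add_zero]
        simp only [add_smul, Finset.sum_add_distrib, sum_indicator_smul]
      have hB : (∑ v : V, (β v - (if v = E1 k then 1 else 0) - (if v = E2 k then 1 else 0))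
            • vert v) + (vert (E1 k) + vert (E2 k)) = (∑ v : V, β v • vert v)
            + (0 : (V → ℕ) × ℕ) := by
        rw [add_zero]
        have h2 : (∑ v : V, ((if v = E1 k then 1 else 0) + (if v = E2 k then 1 else 0))
            • vert v : (V → ℕ) × ℕ) = vert (E1 k) + vert (E2 k) := by
          simp only [add_smul, Finset.sum_add_distrib, sum_indicator_smul]
        rw [← h2, ← Finset.sum_add_distrib]
        refine Finset.sum_congr rfl fun v _ => ?_
        rw [← add_smul]
        congr 1
        by_cases h1 : v = E1 k
        · subst h1; rw [if_pos rfl, if_neg hneqk]; omega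
        · by_cases h2 : v = E2 k
          · subst h2; rw [if_neg h1, if_pos rfl]; omega
          · rw [if_neg h1, if_neg h2]; omega
      have hC : (lam + 1) • (((0 : V → ℕ), 1) : (V → ℕ) × ℕ) + (0 : (V → ℕ) × ℕ)
          = lam • (((0 : V → ℕ), 1) : (V → ℕ) × ℕ) + (((0 : V → ℕ), 1) : (V → ℕ) × ℕ) := by
        rw [add_zero, add_smul, one_smul]
      have hkey : vrep E1 E2 k + (0 : (V → ℕ) × ℕ) + (((0 : V → ℕ), 1) : (V → ℕ) × ℕ)
          = (0 : (V → ℕ) × ℕ) + (vert (E1 k) + vert (E2 k)) + (0 : (V → ℕ) × ℕ) := by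
        apply Prod.ext <;> simp [vrep, vert]
      exact (rep_swap hA hB hC hkey).symm
    · have hs : ∑ t ∈ Finset.univ.filter (fun i : Fin q => i.val < u),
          (α t + (if t = k then 1 else 0))
          = (∑ t ∈ Finset.univ.filter (fun i : Fin q => i.val < u), α t) + 1 := by
        rw [Finset.sum_add_distrib, Finset.sum_ite_eq' _ k (fun _ => 1), if_pos hkF]
      have hbeta : (∑ i ∈ Finset.univ.filter (fun i : Fin q => i.val < u),
          (fun t => α t + (if t = k then 1 else 0)) i)
          = ∑ t ∈ Finset.univ.filter (fun i : Fin q => i.val < u),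
            (α t + (if t = k then 1 else 0)) := Finset.sum_congr rfl fun t _ => rfl
      omega
  · -- case β at E1 k, edge j at E2 k
    obtain ⟨z', hadj', hdz'⟩ := endpoints j (E2 k) hj
    have hjF : ¬ j.val < u := notinF j hjk (Or.inr hj)
    refine absurd (hmaxl2 (fun t => α t + (if t = k then 1 else 0) - (if t = j then 1 else 0))
        (fun v => β v - (if v = E1 k then 1 else 0) + (if v = z' then 1 else 0))
        lam ?_) (not_le.mpr ?_)
    · rw [hrep2]
      have hA : (∑ t : Fin q, (α t + (if t = k then 1 else 0) - (if t = j then 1 else 0))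
            • vrep E1 E2 t) + vrep E1 E2 j
          = (∑ t : Fin q, α t • vrep E1 E2 t) + vrep E1 E2 k := by
        have := sum_coeff_exchange (vrep E1 E2)
          (fun t => α t + (if t = k then 1 else 0) - (if t = j then 1 else 0))
          (fun t => if t = j then 1 else 0) α (fun t => if t = k then 1 else 0) ?_
        · rwa [sum_indicator_smul, sum_indicator_smul] at this
        · intro t
          beta_reduce
          by_cases h1 : t = j
          · subst h1; rw [if_pos rfl, if_neg hjk]; omega
          · rw [if_neg h1]; split_ifs <;> omega
      have hB : (∑ v : V, (β v - (if v = E1 k then 1 else 0) + (if v = z' then 1 else 0))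
            • vert v) + vert (E1 k) = (∑ v : V, β v • vert v) + vert z' := by
        have := sum_coeff_exchange vert
          (fun v => β v - (if v = E1 k then 1 else 0) + (if v = z' then 1 else 0))
          (fun v => if v = E1 k then 1 else 0) β (fun v => if v = z' then 1 else 0) ?_
        · rwa [sum_indicator_smul, sum_indicator_smul] at this
        · intro v
          beta_reduce
          by_cases h1 : v = E1 k
          · subst h1; rw [if_pos rfl]; split_ifs <;> omega
          · rw [if_neg h1]; split_ifs <;> omega
      have hC : lam • (((0 : V → ℕ), 1) : (V → ℕ) × ℕ) + (0 : (V → ℕ) × ℕ)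
          = lam • (((0 : V → ℕ), 1) : (V → ℕ) × ℕ) + (0 : (V → ℕ) × ℕ) := rfl
      have hkey : vrep E1 E2 k + vert z' + (0 : (V → ℕ) × ℕ)
          = vrep E1 E2 j + vert (E1 k) + (0 : (V → ℕ) × ℕ) := by
        apply Prod.ext
        · show (Pi.single (E1 k) 1 + Pi.single (E2 k) 1 : V → ℕ) + Pi.single z' 1 + 0
            = (Pi.single (E1 j) 1 + Pi.single (E2 j) 1) + Pi.single (E1 k) 1 + 0
          rw [hdz']
          abel
        · rfl
      exact (rep_swap hA hB hC hkey).symm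
    · apply Finset.sum_lt_sum
      · intro t htF
        have htj : t ≠ j := fun h => hjF (h ▸ (Finset.mem_filter.mp htF).2)
        beta_reduce
        rw [if_neg htj]
        split_ifs <;> omega
      · refine ⟨k, hkF, ?_⟩
        have hkj : k ≠ j := fun h => hjF (h ▸ hk)
        beta_reduce
        rw [if_pos rfl, if_neg hkj]
        omega
  · -- case edge i at E1 k, β at E2 k (symmetric)
    obtain ⟨z, hadj, hdz⟩ := endpoints i (E1 k) hi
    have hiF : ¬ i.val < u := notinF i hik (Or.inl hi)
    refine absurd (hmaxl2 (fun t => α t + (if t = k then 1 else 0) - (if t = i then 1 else 0))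
        (fun v => β v - (if v = E2 k then 1 else 0) + (if v = z then 1 else 0))
        lam ?_) (not_le.mpr ?_)
    · rw [hrep2]
      have hA : (∑ t : Fin q, (α t + (if t = k then 1 else 0) - (if t = i then 1 else 0))
            • vrep E1 E2 t) + vrep E1 E2 i
          = (∑ t : Fin q, α t • vrep E1 E2 t) + vrep E1 E2 k := by
        have := sum_coeff_exchange (vrep E1 E2)
          (fun t => α t + (if t = k then 1 else 0) - (if t = i then 1 else 0))
          (fun t => if t = i then 1 else 0) α (fun t => if t = k then 1 else 0) ?_
        · rwa [sum_indicator_smul, sum_indicator_smul] at this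
        · intro t
          beta_reduce
          by_cases h1 : t = i
          · subst h1; rw [if_pos rfl, if_neg hik]; omega
          · rw [if_neg h1]; split_ifs <;> omega
      have hB : (∑ v : V, (β v - (if v = E2 k then 1 else 0) + (if v = z then 1 else 0))
            • vert v) + vert (E2 k) = (∑ v : V, β v • vert v) + vert z := by
        have := sum_coeff_exchange vert
          (fun v => β v - (if v = E2 k then 1 else 0) + (if v = z then 1 else 0))
          (fun v => if v = E2 k then 1 else 0) β (fun v => if v = z then 1 else 0) ?_
        · rwa [sum_indicator_smul, sum_indicator_smul] at this
        · intro v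
          beta_reduce
          by_cases h1 : v = E2 k
          · subst h1; rw [if_pos rfl]; split_ifs <;> omega
          · rw [if_neg h1]; split_ifs <;> omega
      have hC : lam • (((0 : V → ℕ), 1) : (V → ℕ) × ℕ) + (0 : (V → ℕ) × ℕ)
          = lam • (((0 : V → ℕ), 1) : (V → ℕ) × ℕ) + (0 : (V → ℕ) × ℕ) := rfl
      have hkey : vrep E1 E2 k + vert z + (0 : (V → ℕ) × ℕ)
          = vrep E1 E2 i + vert (E2 k) + (0 : (V → ℕ) × ℕ) := by
        apply Prod.ext
        · show (Pi.single (E1 k) 1 + Pi.single (E2 k) 1 : V → ℕ) + Pi.single z 1 + 0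
            = (Pi.single (E1 i) 1 + Pi.single (E2 i) 1) + Pi.single (E2 k) 1 + 0
          rw [hdz]
          abel
        · rfl
      exact (rep_swap hA hB hC hkey).symm
    · apply Finset.sum_lt_sum
      · intro t htF
        have hti : t ≠ i := fun h => hiF (h ▸ (Finset.mem_filter.mp htF).2)
        beta_reduce
        rw [if_neg hti]
        split_ifs <;> omega
      · refine ⟨k, hkF, ?_⟩
        have hki : k ≠ i := fun h => hiF (h ▸ hk)
        beta_reduce
        rw [if_pos rfl, if_neg hki]
        omega
  · -- case edge i at E1 k, edge j at E2 k
    obtain ⟨z, hadjz, hdz⟩ := endpoints i (E1 k) hi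
    obtain ⟨z', hadjz', hdz'⟩ := endpoints j (E2 k) hj
    have hij : i ≠ j := fun h => hik (edgek i hi (by rw [h]; exact hj))
    have hiF : ¬ i.val < u := notinF i hik (Or.inl hi)
    have hjF : ¬ j.val < u := notinF j hjk (Or.inr hj)
    have hzz : G.Adj z z' := hP k hk z z' hadjz hadjz'
    obtain ⟨m, hm⟩ := hEall z z' hzz
    have hdm : (Pi.single (E1 m) 1 + Pi.single (E2 m) (1:ℕ) : V → ℕ)
        = Pi.single z 1 + Pi.single z' 1 := by
      rw [Sym2.eq_iff] at hm
      rcases hm with ⟨h1, h2⟩ | ⟨h1, h2⟩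
      · rw [h1, h2]
      · rw [h1, h2, add_comm]
    refine absurd (hmaxl2 (fun t => α t + (if t = k then 1 else 0) + (if t = m then 1 else 0)
          - (if t = i then 1 else 0) - (if t = j then 1 else 0))
        β lam ?_) (not_le.mpr ?_)
    · rw [hrep2]
      have hA : (∑ t : Fin q, (α t + (if t = k then 1 else 0) + (if t = m then 1 else 0)
            - (if t = i then 1 else 0) - (if t = j then 1 else 0)) • vrep E1 E2 t)
            + (vrep E1 E2 i + vrep E1 E2 j)
          = (∑ t : Fin q, α t • vrep E1 E2 t) + (vrep E1 E2 k + vrep E1 E2 m) := by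
        have := sum_coeff_exchange (vrep E1 E2)
          (fun t => α t + (if t = k then 1 else 0) + (if t = m then 1 else 0)
            - (if t = i then 1 else 0) - (if t = j then 1 else 0))
          (fun t => (if t = i then 1 else 0) + (if t = j then 1 else 0))
          α (fun t => (if t = k then 1 else 0) + (if t = m then 1 else 0)) ?_
        · simpa only [add_smul, Finset.sum_add_distrib, sum_indicator_smul] using this
        · intro t
          beta_reduce
          by_cases h1 : t = i
          · subst h1; rw [if_pos rfl, if_neg hij, if_neg hik]; split_ifs <;> omega
          · by_cases h2 : t = j
            · subst h2; rw [if_neg (Ne.symm hij), if_pos rfl, if_neg hjk]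
              split_ifs <;> omega
            · rw [if_neg h1, if_neg h2]; split_ifs <;> omega
      have hB : (∑ v : V, β v • vert v) + (0 : (V → ℕ) × ℕ)
          = (∑ v : V, β v • vert v) + (0 : (V → ℕ) × ℕ) := rfl
      have hC : lam • (((0 : V → ℕ), 1) : (V → ℕ) × ℕ) + (0 : (V → ℕ) × ℕ)
          = lam • (((0 : V → ℕ), 1) : (V → ℕ) × ℕ) + (0 : (V → ℕ) × ℕ) := rfl
      have hkey : (vrep E1 E2 k + vrep E1 E2 m) + (0 : (V → ℕ) × ℕ) + (0 : (V → ℕ) × ℕ)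
          = (vrep E1 E2 i + vrep E1 E2 j) + (0 : (V → ℕ) × ℕ) + (0 : (V → ℕ) × ℕ) := by
        apply Prod.ext
        · show (Pi.single (E1 k) 1 + Pi.single (E2 k) 1 : V → ℕ)
              + (Pi.single (E1 m) 1 + Pi.single (E2 m) 1) + 0 + 0
            = (Pi.single (E1 i) 1 + Pi.single (E2 i) 1)
              + (Pi.single (E1 j) 1 + Pi.single (E2 j) 1) + 0 + 0
          rw [hdz, hdz', hdm]
          abel
        · rfl
      exact (rep_swap hA hB hC hkey).symm
    · apply Finset.sum_lt_sum
      · intro t htF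
        have hti : t ≠ i := fun h => hiF (h ▸ (Finset.mem_filter.mp htF).2)
        have htj : t ≠ j := fun h => hjF (h ▸ (Finset.mem_filter.mp htF).2)
        beta_reduce
        rw [if_neg hti, if_neg htj]
        split_ifs <;> omega
      · refine ⟨k, hkF, ?_⟩
        have hki : k ≠ i := fun h => hiF (h ▸ hk)
        have hkj : k ≠ j := fun h => hjF (h ▸ hk)
        beta_reduce
        rw [if_pos rfl, if_neg hki, if_neg hkj]
        split_ifs <;> omega
end
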